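/- arXiv:2307.05418 — 3 statements merged into one kernel-verified Lean document; each statement's English description precedes it below -/
import Mathlib

section
/- Let (X, A) be a measurable space, F : X ⇉ ℝᵐ a measurable set-valued map with nonempty compact convex values, and f : X → ℝᵐ a measurable function with f(x) ∈ F(x) for a.e. x. Then the set-valued map x ↦ N_{F(x)}(f(x)) (the normal cone to F(x) at f(x)) is measurable. -/
/-!
The normal cone `N_C(u)` is the inner dual of `u - C`, so by the bipolar theorem its inner dual is
the closed conic hull of `u - C`. Projecting `q` onto `N_C(u)` (Moreau decomposition) leaves a
residual in that hull, and since `C` is convex the inequality `⟪q, v - u⟫ ≤ ε ‖v - u‖` on `C`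
passes to the hull; hence it holds on `C` iff `N_C(u)` meets the closed ball of radius `ε`
around `q`. For `C = F x`, `u = f x` this inequality is a measurable condition on `x`, and closed
balls with centres in a countable dense set and rational radii suffice to test meeting an open set.
-/

open MeasureTheory Filter Topology Set

/-- Measurability of a set-valued map `G : X ⇉ ℝᵐ`: the preimage
`{x : G(x) ∩ U ≠ ∅}` is measurable for every open `U`. -/
def SVMeasurable {X : Type*} [MeasurableSpace X] {m : ℕ}
    (G : X → Set (EuclideanSpace ℝ (Fin m))) : Prop :=
  ∀ U : Set (EuclideanSpace ℝ (Fin m)), IsOpen U → MeasurableSet {x | (G x ∩ U).Nonempty}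

/-- The normal cone to a convex set `C ⊆ ℝᵐ` at a point `u`. -/
def NormalCone {m : ℕ} (C : Set (EuclideanSpace ℝ (Fin m))) (u : EuclideanSpace ℝ (Fin m)) :
    Set (EuclideanSpace ℝ (Fin m)) :=
  {ν | ∀ v ∈ C, (inner ℝ ν (v - u) : ℝ) ≤ 0}

open scoped RealInnerProductSpace Pointwise

lemma PointedCone.coe_hull_subset_insert_zero {𝕜 M : Type*} [Field 𝕜] [LinearOrder 𝕜]
    [IsStrictOrderedRing 𝕜] [AddCommGroup M] [Module 𝕜 M] (s : Set M) :
    (PointedCone.hull 𝕜 s : Set M) ⊆ insert 0 (ConvexCone.hull 𝕜 s : Set M) := by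
  intro x hx
  induction hx using Submodule.span_induction with
  | mem y hy => exact .inr (ConvexCone.subset_hull hy)
  | zero => exact .inl rfl
  | add y z _ _ hy hz =>
    rcases hy with rfl | hy
    · simpa using hz
    rcases hz with rfl | hz
    · simpa using Or.inr hy
    exact .inr ((ConvexCone.hull 𝕜 s).add_mem hy hz)
  | smul t y _ hy =>
    rcases hy with rfl | hy
    · simp
    rcases t.2.eq_or_lt with ht | ht
    · exact .inl (by rw [show t = 0 from Subtype.ext ht.symm, zero_smul])
    · exact .inr ((ConvexCone.hull 𝕜 s).smul_mem ht hy)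

namespace ProperCone

variable {E : Type*} [NormedAddCommGroup E] [InnerProductSpace ℝ E]

def closedHull (s : Set E) : ProperCone ℝ E := Submodule.closure (PointedCone.hull ℝ s)

lemma subset_closedHull (s : Set E) : s ⊆ closedHull s :=
  PointedCone.subset_hull.trans subset_closure

lemma innerDual_innerDual_le_closedHull [CompleteSpace E] (s : Set E) :
    innerDual (innerDual s : Set E) ≤ closedHull s := calc
  innerDual (innerDual s : Set E) ≤ innerDual (innerDual (closedHull s : Set E) : Set E) :=
    innerDual_le_innerDual (innerDual_le_innerDual (subset_closedHull s))
  _ = closedHull s := innerDual_innerDual _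

-- Moreau decomposition: `n` is the metric projection of `q` onto `N`.
lemma exists_mem_sub_mem_innerDual_inner_eq_zero [CompleteSpace E] (N : ProperCone ℝ E) (q : E) :
    ∃ n ∈ N, n - q ∈ innerDual (N : Set E) ∧ ⟪q - n, n⟫ = 0 := by
  obtain ⟨n, hnN, hmin⟩ := exists_norm_eq_iInf_of_complete_convex N.nonempty
    N.isClosed.isComplete N.convex q
  have hvar := (norm_eq_iInf_iff_real_inner_le_zero N.convex hnN).1 hmin
  have horth : ⟪q - n, n⟫ = 0 := by
    have h0 := hvar 0 N.zero_mem
    have h2 := hvar ((2 : ℝ) • n) (N.smul_mem hnN zero_le_two)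
    rw [zero_sub, inner_neg_right] at h0
    rw [two_smul, add_sub_cancel_right] at h2
    linarith
  refine ⟨n, hnN, mem_innerDual.2 fun ν hν => ?_, horth⟩
  have := hvar ν hν
  rw [inner_sub_right, horth, sub_zero] at this
  rw [real_inner_comm, ← neg_sub q n, inner_neg_left]
  linarith

lemma nonneg_on_closedHull {s : Set E} (hs : Convex ℝ s) {q : E} {ε : ℝ}
    (h : ∀ x ∈ s, 0 ≤ ⟪q, x⟫ + ε * ‖x‖) :
    ∀ x ∈ closedHull s, 0 ≤ ⟪q, x⟫ + ε * ‖x‖ := by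
  have hcone : (PointedCone.hull ℝ s : Set E) ⊆ {x | 0 ≤ ⟪q, x⟫ + ε * ‖x‖} := by
    intro x hx
    rcases PointedCone.coe_hull_subset_insert_zero s hx with rfl | hx
    · simp
    obtain ⟨r, hr, y, hy, rfl⟩ := (ConvexCone.mem_hull_of_convex hs).1 hx
    have := mul_nonneg hr.le (h y hy)
    simp only [mem_ofPred_eq, inner_smul_right, norm_smul, Real.norm_of_nonneg hr.le]
    linarith
  intro x hx
  exact (isClosed_le continuous_const (by fun_prop)).closure_subset_iff.2 hcone hx

lemma exists_mem_innerDual_dist_le [CompleteSpace E] {s : Set E} (hs : Convex ℝ s) {q : E}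
    {ε : ℝ} (hε : 0 ≤ ε) (h : ∀ x ∈ s, 0 ≤ ⟪q, x⟫ + ε * ‖x‖) : ∃ n ∈ innerDual s, dist n q ≤ ε := by
  obtain ⟨n, hn, hp, horth⟩ := exists_mem_sub_mem_innerDual_inner_eq_zero (innerDual s) q
  refine ⟨n, hn, ?_⟩
  have hpK := innerDual_innerDual_le_closedHull s hp
  have hψ := nonneg_on_closedHull hs h _ hpK
  have horth' : ⟪n - q, n⟫ = 0 := by rw [← neg_sub, inner_neg_left, horth, neg_zero]
  have hq : ⟪q, n - q⟫ = -‖n - q‖ ^ 2 := calc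
    ⟪q, n - q⟫ = ⟪n - (n - q), n - q⟫ := by rw [sub_sub_cancel]
    _ = ⟪n, n - q⟫ - ‖n - q‖ ^ 2 := by rw [inner_sub_left, real_inner_self_eq_norm_sq]
    _ = -‖n - q‖ ^ 2 := by rw [real_inner_comm, horth', zero_sub]
  rw [hq] at hψ
  rw [dist_eq_norm]
  nlinarith [norm_nonneg (n - q)]

end ProperCone

section NormalCone

variable {m : ℕ} {C : Set (EuclideanSpace ℝ (Fin m))} {u q : EuclideanSpace ℝ (Fin m)} {ε : ℝ}

lemma normalCone_eq_innerDual : NormalCone C u = ProperCone.innerDual ({u} - C) := by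
  ext ν
  simp only [NormalCone, singleton_sub, SetLike.mem_coe, ProperCone.mem_innerDual,
    forall_mem_image, mem_ofPred_eq]
  refine forall₂_congr fun v _ => ?_
  rw [← neg_sub v u, inner_neg_left, real_inner_comm, neg_nonneg]

lemma exists_mem_normalCone_dist_le (hC : Convex ℝ C) (hε : 0 ≤ ε)
    (h : ∀ v ∈ C, ⟪q, v - u⟫ ≤ ε * ‖v - u‖) : ∃ n ∈ NormalCone C u, dist n q ≤ ε := by
  rw [normalCone_eq_innerDual]
  refine ProperCone.exists_mem_innerDual_dist_le ((convex_singleton u).sub hC) hε ?_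
  rw [singleton_sub]
  rintro _ ⟨v, hv, rfl⟩
  dsimp only
  rw [← neg_sub v u, inner_neg_right, norm_neg]
  linarith [h v hv]

lemma normalCone_inter_closedBall_nonempty_iff (hC : Convex ℝ C) (hε : 0 ≤ ε) :
    (NormalCone C u ∩ Metric.closedBall q ε).Nonempty ↔
      ∀ v ∈ C, ⟪q, v - u⟫ ≤ ε * ‖v - u‖ := by
  constructor
  · rintro ⟨ν, hν, hνq⟩ v hv
    calc ⟪q, v - u⟫ = ⟪ν, v - u⟫ + ⟪q - ν, v - u⟫ := by rw [inner_sub_left]; ring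
      _ ≤ 0 + ‖q - ν‖ * ‖v - u‖ := add_le_add (hν v hv) (real_inner_le_norm _ _)
      _ ≤ ε * ‖v - u‖ := by
        rw [zero_add, ← dist_eq_norm, dist_comm]
        exact mul_le_mul_of_nonneg_right hνq (norm_nonneg _)
  · exact exists_mem_normalCone_dist_le hC hε

end NormalCone

section SVMeasurable

variable {X : Type*} [MeasurableSpace X] {m : ℕ}

lemma SVMeasurable.measurableSet_exists_mem {Y : Type*} [TopologicalSpace Y]
    [SecondCountableTopology Y] [MeasurableSpace Y] [OpensMeasurableSpace Y]
    {G : X → Set (EuclideanSpace ℝ (Fin m))} (hG : SVMeasurable G) {g : X → Y} (hg : Measurable g)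
    {W : Set (Y × EuclideanSpace ℝ (Fin m))} (hW : IsOpen W) :
    MeasurableSet {x | ∃ v ∈ G x, (g x, v) ∈ W} := by
  let B := TopologicalSpace.countableBasis Y
  let B' := TopologicalSpace.countableBasis (EuclideanSpace ℝ (Fin m))
  have hB := TopologicalSpace.isBasis_countableBasis Y
  have hB' := TopologicalSpace.isBasis_countableBasis (EuclideanSpace ℝ (Fin m))
  have : {x | ∃ v ∈ G x, (g x, v) ∈ W} =
      ⋃ a ∈ B, ⋃ b ∈ B', ⋃ (_ : a ×ˢ b ⊆ W), g ⁻¹' a ∩ {x | (G x ∩ b).Nonempty} := by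
    ext x
    simp only [mem_ofPred_eq, mem_iUnion, mem_inter_iff, mem_preimage, exists_prop]
    constructor
    · rintro ⟨v, hv, hxv⟩
      obtain ⟨_, ⟨a, ha, b, hb, rfl⟩, ⟨hxa, hvb⟩, hab⟩ :=
        (hB.prod hB').exists_subset_of_mem_open hxv hW
      exact ⟨a, ha, b, hb, hab, hxa, v, hv, hvb⟩
    · rintro ⟨a, -, b, -, hab, hxa, v, hv, hvb⟩
      exact ⟨v, hv, hab ⟨hxa, hvb⟩⟩
  rw [this]
  refine .biUnion (TopologicalSpace.countable_countableBasis Y) fun a ha => .biUnion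
    (TopologicalSpace.countable_countableBasis _) fun b hb => .iUnion fun _ => ?_
  exact (hg (hB.isOpen ha).measurableSet).inter (hG b (hB'.isOpen hb))

lemma SVMeasurable.of_measurableSet_inter_closedBall {G : X → Set (EuclideanSpace ℝ (Fin m))}
    (h : ∀ q (ε : ℚ), 0 < ε → MeasurableSet {x | (G x ∩ Metric.closedBall q ε).Nonempty}) :
    SVMeasurable G := by
  intro U hU
  obtain ⟨D, hDc, hD⟩ := TopologicalSpace.exists_countable_dense (EuclideanSpace ℝ (Fin m))
  have : {x | (G x ∩ U).Nonempty} = ⋃ q ∈ D, ⋃ (ε : ℚ) (_ : 0 < ε ∧ Metric.closedBall q ε ⊆ U),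
      {x | (G x ∩ Metric.closedBall q ε).Nonempty} := by
    ext x
    simp only [mem_ofPred_eq, mem_iUnion, exists_prop]
    constructor
    · rintro ⟨ν, hνG, hνU⟩
      obtain ⟨η, hη, hball⟩ := Metric.isOpen_iff.1 hU ν hνU
      obtain ⟨ε, hε0, hεη⟩ := exists_rat_btwn (half_pos hη)
      obtain ⟨q, hqD, hqν⟩ := hD.exists_dist_lt ν (show (0 : ℝ) < ε from hε0)
      refine ⟨q, hqD, ε, ⟨by exact_mod_cast hε0, fun z hz => hball ?_⟩, ν, hνG, ?_⟩
      · calc dist z ν ≤ dist z q + dist q ν := dist_triangle z q ν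
          _ < η := by rw [Metric.mem_closedBall] at hz; rw [dist_comm] at hqν; linarith
      · exact hqν.le
    · rintro ⟨q, -, ε, ⟨-, hεU⟩, ν, hνG, hνq⟩
      exact ⟨ν, hνG, hεU hνq⟩
  rw [this]
  exact .biUnion hDc fun q _ => .iUnion fun ε => .iUnion fun hε => h q ε hε.1

lemma SVMeasurable.measurableSet_forall_inner_le {G : X → Set (EuclideanSpace ℝ (Fin m))}
    (hG : SVMeasurable G) {g : X → EuclideanSpace ℝ (Fin m)} (hg : Measurable g)
    (q : EuclideanSpace ℝ (Fin m)) (ε : ℝ) :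
    MeasurableSet {x | ∀ v ∈ G x, ⟪q, v - g x⟫ ≤ ε * ‖v - g x‖} := by
  have hW : IsOpen {p : EuclideanSpace ℝ (Fin m) × EuclideanSpace ℝ (Fin m) |
      ε * ‖p.2 - p.1‖ < ⟪q, p.2 - p.1⟫} := isOpen_lt (by fun_prop) (by fun_prop)
  convert (hG.measurableSet_exists_mem hg hW).compl using 1
  ext x
  simp [not_lt]

end SVMeasurable

theorem stmt_3_general {X : Type*} [MeasurableSpace X] {m : ℕ}
    (F : X → Set (EuclideanSpace ℝ (Fin m)))
    (hFmeas : SVMeasurable F)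
    (hFconv : ∀ x, Convex ℝ (F x))
    (f : X → EuclideanSpace ℝ (Fin m)) (hfmeas : Measurable f) :
    SVMeasurable (fun x => NormalCone (F x) (f x)) := by
  refine SVMeasurable.of_measurableSet_inter_closedBall fun q ε hε => ?_
  have hε' : (0 : ℝ) ≤ ε := by exact_mod_cast hε.le
  convert hFmeas.measurableSet_forall_inner_le hfmeas q ε using 1
  ext x
  exact normalCone_inter_closedBall_nonempty_iff (hFconv x) hε'

/-- If `F : X ⇉ ℝᵐ` is a measurable set-valued map with nonempty compact
convex values and `f` is a measurable selection (a.e.), then the set-valued map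
`x ↦ N_{F(x)}(f(x))` is measurable. -/
theorem stmt_3 {X : Type*} [MeasurableSpace X] {m : ℕ} (μ : MeasureTheory.Measure X)
    (F : X → Set (EuclideanSpace ℝ (Fin m)))
    (hFmeas : SVMeasurable F)
    (hFne : ∀ x, (F x).Nonempty) (hFcpt : ∀ x, IsCompact (F x))
    (hFconv : ∀ x, Convex ℝ (F x))
    (f : X → EuclideanSpace ℝ (Fin m)) (hfmeas : Measurable f)
    (hfF : ∀ᵐ x ∂μ, f x ∈ F x) :
    SVMeasurable (fun x => NormalCone (F x) (f x)) :=
  stmt_3_general F hFmeas hFconv f hfmeas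
end

section
/- Let (X, A, μ) be a σ-finite measure space, F : X ⇉ ℝᵐ a measurable set-valued map with nonempty compact convex values, p ∈ [1, ∞], and f ∈ Lᵖ(X; ℝᵐ) with f(x) ∈ F(x) a.e. Suppose there exists a set E of positive measure such that f(x) ∉ ext F(x) for a.e. x ∈ E. Then there exist two distinct functions α, β ∈ Lᵖ(X; ℝᵐ) with α(x), β(x) ∈ F(x) a.e. and f = (α + β)/2 a.e. in X. -/
open MeasureTheory Filter Topology Set
open scoped ENNReal

/-!
If `f x ∈ F x` is not extreme then `f x ± v ∈ F x` for some `v ≠ 0`, and it suffices to choose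
such displacements `g x` measurably, boundedly, and nonzero on a set of positive finite measure:
then `f ± g` are the required selections. The admissible displacements form compact convex sets
`D x`; one of countably many closed balls `K` avoiding `0` meets `D x` on a set of positive
measure. There the point of least norm of `D x ∩ K` is a measurable choice: by strict convexity it
is unique, so it lies in a closed set `s` exactly when `D x ∩ K ∩ s` comes as close to `0` as
`D x ∩ K`, which compares two measurable functions of `x`.
-/

open Metric

theorem Convex.eq_of_norm_le_of_forall_norm_le {E : Type*} [NormedAddCommGroup E]
    [NormedSpace ℝ E] [StrictConvexSpace ℝ E] {s : Set E} (hs : Convex ℝ s) {v w : E}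
    (hv : v ∈ s) (hw : w ∈ s) (hmin : ∀ u ∈ s, ‖v‖ ≤ ‖u‖) (hwv : ‖w‖ ≤ ‖v‖) : w = v := by
  by_contra hne
  have hmid : (1 / 2 : ℝ) • w + (1 / 2 : ℝ) • v ∈ s :=
    hs hw hv (by norm_num) (by norm_num) (by norm_num)
  exact (norm_combo_lt_of_ne hwv le_rfl hne (by norm_num) (by norm_num) (by norm_num)).not_ge
    (hmin _ hmid)

theorem Convex.exists_add_sub_mem_of_notMem_extremePoints {E : Type*} [AddCommGroup E]
    [Module ℝ E] {A : Set E} (hA : Convex ℝ A) {x : E} (hx : x ∈ A)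
    (hnx : x ∉ A.extremePoints ℝ) : ∃ v ≠ 0, x + v ∈ A ∧ x - v ∈ A := by
  simp only [mem_extremePoints, hx, true_and, not_forall] at hnx
  obtain ⟨y, hy, z, hz, ⟨a, b, ha, hb, hab, rfl⟩, hyz⟩ := hnx
  have hne : z - y ≠ 0 := by
    refine sub_ne_zero.2 fun hzy => hyz ?_
    subst hzy
    simp [← add_smul, hab]
  set t := min a b
  have ht : 0 < t := lt_min ha hb
  refine ⟨t • (z - y), smul_ne_zero ht.ne' hne, ?_, ?_⟩
  · convert hA hy hz (sub_nonneg.2 (min_le_left a b)) (by linarith)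
      (by linarith : a - t + (b + t) = 1) using 1
    module
  · convert hA hy hz (by linarith) (sub_nonneg.2 (min_le_right a b))
      (by linarith : a + t + (b - t) = 1) using 1
    module

theorem exists_mem_closedBall_half_norm {E : Type*} [SeminormedAddCommGroup E] {q : ℕ → E}
    (hq : DenseRange q) {v : E} (hv : ‖v‖ ≠ 0) :
    ∃ j, v ∈ closedBall (q j) (‖q j‖ / 2) ∧ (0 : E) ∉ closedBall (q j) (‖q j‖ / 2) := by
  have hv0 : 0 < ‖v‖ := (norm_nonneg v).lt_of_ne' hv
  obtain ⟨j, hj⟩ := Metric.denseRange_iff.1 hq v (‖v‖ / 3) (by positivity)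
  have := norm_le_insert' v (q j)
  rw [dist_eq_norm] at hj
  refine ⟨j, ?_, ?_⟩
  · rw [mem_closedBall, dist_eq_norm]; linarith
  · rw [mem_closedBall, dist_zero_left, not_le]; linarith

section Hits

variable {X E : Type*} [MeasurableSpace X]

theorem measurable_infEDist_of_forall_isOpen [PseudoEMetricSpace E] {F : X → Set E}
    (hF : ∀ U, IsOpen U → MeasurableSet {x | (F x ∩ U).Nonempty}) (y : E) :
    Measurable fun x => infEDist y (F x) := by
  refine measurable_of_Iio fun t => ?_
  convert hF _ (isOpen_eball (x := y) (ε := t)) using 1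
  ext x
  simp [infEDist_lt_iff, Set.Nonempty, edist_comm]

theorem Measurable.infEDist_of_forall_isOpen [MetricSpace E] [SecondCountableTopology E]
    [MeasurableSpace E] [OpensMeasurableSpace E] {F : X → Set E}
    (hF : ∀ U, IsOpen U → MeasurableSet {x | (F x ∩ U).Nonempty}) {h : X → E}
    (hh : Measurable h) : Measurable fun x => infEDist (h x) (F x) :=
  (measurable_uncurry_of_continuous_of_measurable (u := fun y x => infEDist y (F x))
    (fun _ => continuous_infEDist) (measurable_infEDist_of_forall_isOpen hF)).comp
    (hh.prodMk measurable_id)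

theorem measurableSet_exists_mem_eq_zero [TopologicalSpace E]
    [TopologicalSpace.PseudoMetrizableSpace E] {K : Set E} (hK : IsCompact K)
    {φ : X → E → ℝ≥0∞} (hcont : ∀ x, Continuous (φ x)) (hmeas : ∀ v, Measurable fun x => φ x v) :
    MeasurableSet {x | ∃ v ∈ K, φ x v = 0} := by
  obtain ⟨t, htK, htc, hKt⟩ := hK.isSeparable.exists_countable_dense_subset
  suffices {x | ∃ v ∈ K, φ x v = 0} = ⋂ n : ℕ, ⋃ w ∈ t, {x | φ x w < (n : ℝ≥0∞)⁻¹} by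
    rw [this]
    exact .iInter fun n => .biUnion htc fun w _ => measurableSet_lt (hmeas w) measurable_const
  ext x
  simp only [mem_ofPred_eq, mem_iInter, mem_iUnion, exists_prop]
  constructor
  · rintro ⟨v, hvK, hv⟩ n
    have hopen : IsOpen {w | φ x w < (n : ℝ≥0∞)⁻¹} := isOpen_lt (hcont x) continuous_const
    have hvmem : v ∈ {w | φ x w < (n : ℝ≥0∞)⁻¹} := by simp [hv]
    obtain ⟨w, hw, hwt⟩ := _root_.mem_closure_iff.1 (hKt hvK) _ hopen hvmem
    exact ⟨w, hwt, hw⟩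
  · intro hsmall
    obtain ⟨w₀, hw₀, -⟩ := hsmall 0
    obtain ⟨v, hvK, hvmin⟩ := hK.exists_isMinOn ⟨w₀, htK hw₀⟩ (hcont x).continuousOn
    refine ⟨v, hvK, by_contra fun hv => ?_⟩
    obtain ⟨n, hn⟩ := ENNReal.exists_inv_nat_lt hv
    obtain ⟨w, hwt, hw⟩ := hsmall n
    exact (hvmin (htK hwt)).not_gt (hw.trans hn)

theorem measurable_infEDist_of_forall_isClosed [PseudoEMetricSpace E] {N : X → Set E}
    (hN : ∀ C, IsClosed C → MeasurableSet {x | (N x ∩ C).Nonempty})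
    (hcpt : ∀ x, IsCompact (N x)) (y : E) : Measurable fun x => infEDist y (N x) := by
  refine measurable_of_Iic fun t => ?_
  rcases eq_or_ne t ⊤ with rfl | ht
  · simp
  convert hN _ (isClosed_closedEBall (a := y) (r := t)) using 1
  ext x
  refine ⟨fun hx => ?_, fun ⟨z, hz, hzt⟩ =>
    (infEDist_le_edist_of_mem hz).trans (mem_closedEBall'.1 hzt)⟩
  obtain ⟨z, hz, hzy⟩ := (hcpt x).exists_infEDist_eq_edist
    (nonempty_iff_ne_empty.2 fun he => ht (top_le_iff.1 (by simpa [he] using hx))) y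
  exact ⟨z, hz, mem_closedEBall'.2 (hzy ▸ hx)⟩

theorem exists_measurable_forall_mem_of_forall_isClosed [NormedAddCommGroup E] [NormedSpace ℝ E]
    [StrictConvexSpace ℝ E] [MeasurableSpace E] [BorelSpace E] {N : X → Set E}
    (hN : ∀ C, IsClosed C → MeasurableSet {x | (N x ∩ C).Nonempty})
    (hcpt : ∀ x, IsCompact (N x)) (hconv : ∀ x, Convex ℝ (N x)) (hne : ∀ x, (N x).Nonempty) :
    ∃ g : X → E, Measurable g ∧ ∀ x, g x ∈ N x := by
  choose g hgN hg using fun x => (hcpt x).exists_infEDist_eq_edist (hne x) 0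
  have edist_zero_le {u v : E} : edist 0 u ≤ edist 0 v ↔ ‖u‖ ≤ ‖v‖ := by
    rw [edist_comm, edist_zero_right, edist_comm, edist_zero_right, enorm_le_iff_norm_le]
  have hmin x : ∀ u ∈ N x, ‖g x‖ ≤ ‖u‖ := fun u hu =>
    edist_zero_le.1 ((hg x).symm.le.trans (infEDist_le_edist_of_mem hu))
  refine ⟨g, measurable_of_isClosed fun s hs => ?_, hgN⟩
  have hNs : Measurable fun x => infEDist 0 (N x ∩ s) :=
    measurable_infEDist_of_forall_isClosed
      (fun C hC => by simpa only [inter_assoc] using hN _ (hs.inter hC))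
      (fun x => (hcpt x).inter_right hs) 0
  convert measurableSet_le hNs (measurable_infEDist_of_forall_isClosed hN hcpt 0) using 1
  ext x
  rw [mem_preimage, mem_ofPred_eq, hg x]
  refine ⟨fun hx => infEDist_le_edist_of_mem ⟨hgN x, hx⟩, fun hx => ?_⟩
  obtain ⟨w, ⟨hwN, hws⟩, hw⟩ := ((hcpt x).inter_right hs).exists_infEDist_eq_edist
    (nonempty_iff_ne_empty.2 fun he => by simp [he] at hx) 0
  rwa [← (hconv x).eq_of_norm_le_of_forall_norm_le (hgN x) hwN (hmin x)
    (edist_zero_le.1 (hw ▸ hx))]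

end Hits

theorem memLp_indicator_of_forall_norm_le {X E : Type*} [MeasurableSpace X]
    [NormedAddCommGroup E] {μ : Measure X} {p : ℝ≥0∞} {A : Set X} (hA : MeasurableSet A)
    (hAfin : μ A ≠ ∞) {g : X → E} (hg : AEStronglyMeasurable g μ) {R : ℝ}
    (hR : ∀ x ∈ A, ‖g x‖ ≤ R) :
    MemLp (A.indicator g) p μ := by
  have : IsFiniteMeasure (μ.restrict A) := isFiniteMeasure_restrict.2 hAfin
  rw [memLp_indicator_iff_restrict hA]
  exact MemLp.of_bound hg.restrict R ((ae_restrict_iff' hA).2 (ae_of_all _ hR))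

section SymmDisplacements

variable {X E : Type*} [NormedAddCommGroup E]

def symmDisplacements (F : X → Set E) (f : X → E) (x : X) : Set E :=
  {v | f x + v ∈ F x ∧ f x - v ∈ F x}

theorem convex_symmDisplacements [NormedSpace ℝ E] {F : X → Set E} {f : X → E} {x : X}
    (hF : Convex ℝ (F x)) : Convex ℝ (symmDisplacements F f x) := by
  have hT := hF.translate_preimage_right (f x)
  convert hT.inter hT.neg using 1
  ext v
  simp [symmDisplacements, sub_eq_add_neg]

theorem isClosed_symmDisplacements {F : X → Set E} {f : X → E} {x : X} (hF : IsClosed (F x)) :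
    IsClosed (symmDisplacements F f x) :=
  (hF.preimage (continuous_const.add continuous_id)).inter
    (hF.preimage (continuous_const.sub continuous_id))

variable [MeasurableSpace X] [MeasurableSpace E]

theorem measurableSet_symmDisplacements_inter_nonempty [SecondCountableTopology E] [BorelSpace E]
    {F : X → Set E} (hF : ∀ U, IsOpen U → MeasurableSet {x | (F x ∩ U).Nonempty})
    (hFcl : ∀ x, IsClosed (F x)) {f : X → E} (hf : Measurable f) {K : Set E} (hK : IsCompact K) :
    MeasurableSet {x | (symmDisplacements F f x ∩ K).Nonempty} := by
  convert measurableSet_exists_mem_eq_zero hK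
    (φ := fun x v => infEDist (f x + v) (F x) + infEDist (f x - v) (F x))
    (fun x => (continuous_infEDist.comp (continuous_const.add continuous_id)).add
      (continuous_infEDist.comp (continuous_const.sub continuous_id)))
    (fun v => ((hf.add_const v).infEDist_of_forall_isOpen hF).add
      ((hf.sub_const v).infEDist_of_forall_isOpen hF))
    using 1
  ext x
  simp [symmDisplacements, Set.Nonempty, ← mem_iff_infEDist_zero_of_closed (hFcl x), and_comm]

theorem exists_measurable_ne_zero_mem_symmDisplacements [NormedSpace ℝ E] [StrictConvexSpace ℝ E]
    [ProperSpace E] [BorelSpace E] {μ : Measure X} [SigmaFinite μ] {F : X → Set E}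
    (hF : ∀ U, IsOpen U → MeasurableSet {x | (F x ∩ U).Nonempty}) (hFcl : ∀ x, IsClosed (F x))
    (hFconv : ∀ x, Convex ℝ (F x)) {f : X → E} (hf : Measurable f) {S : Set X}
    (hS : MeasurableSet S) (hSpos : 0 < μ S)
    (hnz : ∀ᵐ x ∂μ, x ∈ S → ∃ v ≠ 0, v ∈ symmDisplacements F f x) :
    ∃ A : Set X, MeasurableSet A ∧ 0 < μ A ∧ μ A < ∞ ∧ ∃ g : X → E, Measurable g ∧
      ∃ R, ∀ x ∈ A, g x ≠ 0 ∧ ‖g x‖ ≤ R ∧ g x ∈ symmDisplacements F f x := by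
  classical
  set q := TopologicalSpace.denseSeq E
  set K : ℕ → Set E := fun j => closedBall (q j) (‖q j‖ / 2)
  have hK j : IsCompact (K j) := isCompact_closedBall _ _
  have hhit j := measurableSet_symmDisplacements_inter_nonempty hF hFcl hf (hK j)
  obtain ⟨⟨j, h0j⟩, hj⟩ : ∃ j : {j // (0 : E) ∉ K j},
      0 < μ (S ∩ {x | (symmDisplacements F f x ∩ K j).Nonempty}) := by
    refine exists_measure_pos_of_not_measure_iUnion_null (hSpos.trans_le (measure_mono_ae ?_)).ne'
    filter_upwards [hnz] with x hx hxS
    obtain ⟨v, hv0, hv⟩ := hx hxS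
    obtain ⟨j, hvj, h0j⟩ := exists_mem_closedBall_half_norm
      (TopologicalSpace.denseRange_denseSeq E) (norm_ne_zero_iff.2 hv0)
    exact mem_iUnion.2 ⟨⟨j, h0j⟩, hxS, v, hv, hvj⟩
  obtain ⟨A, hA, hAS, hApos, hAfin⟩ := Measure.exists_subset_measure_lt_top (hS.inter (hhit j)) hj
  obtain ⟨g, hg, hgN⟩ := exists_measurable_forall_mem_of_forall_isClosed
    (N := fun y : A => symmDisplacements F f y ∩ K j)
    (fun C hC => by
      simp_rw [inter_assoc]
      exact measurable_subtype_coe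
        (measurableSet_symmDisplacements_inter_nonempty hF hFcl hf ((hK j).inter_right hC)))
    (fun y => (hK j).inter_left (isClosed_symmDisplacements (hFcl y)))
    (fun y => (convex_symmDisplacements (hFconv y)).inter (convex_closedBall _ _))
    (fun y => (hAS y.2).2)
  refine ⟨A, hA, hApos, hAfin, fun x => if h : x ∈ A then g ⟨x, h⟩ else 0,
    hg.dite measurable_const hA, ‖q j‖ + ‖q j‖ / 2, fun x hx => ?_⟩
  obtain ⟨hD, hgK⟩ := hgN ⟨x, hx⟩
  simp only [dif_pos hx]
  exact ⟨ne_of_mem_of_not_mem hgK h0j, norm_le_norm_add_const_of_dist_le hgK, hD⟩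

theorem exists_memLp_mem_symmDisplacements [NormedSpace ℝ E] [StrictConvexSpace ℝ E]
    [ProperSpace E] [BorelSpace E] {μ : Measure X} [SigmaFinite μ] (p : ℝ≥0∞) {F : X → Set E}
    (hF : ∀ U, IsOpen U → MeasurableSet {x | (F x ∩ U).Nonempty}) (hFcl : ∀ x, IsClosed (F x))
    (hFconv : ∀ x, Convex ℝ (F x)) {f : X → E} (hf : Measurable f) {S : Set X}
    (hS : MeasurableSet S) (hSpos : 0 < μ S)
    (hnz : ∀ᵐ x ∂μ, x ∈ S → ∃ v ≠ 0, v ∈ symmDisplacements F f x) :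
    ∃ g : X → E, MemLp g p μ ∧ ¬ g =ᵐ[μ] 0 ∧
      ∀ x, f x ∈ F x → g x ∈ symmDisplacements F f x := by
  obtain ⟨A, hA, hApos, hAfin, g, hg, R, hgA⟩ :=
    exists_measurable_ne_zero_mem_symmDisplacements hF hFcl hFconv hf hS hSpos hnz
  refine ⟨A.indicator g, memLp_indicator_of_forall_norm_le hA hAfin.ne hg.aestronglyMeasurable
    fun x hx => (hgA x hx).2.1, fun h => ?_, fun x hx => ?_⟩
  · refine hApos.ne' (measure_eq_zero_iff_ae_notMem.2 ?_)
    filter_upwards [h] with x hx hxA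
    exact (hgA x hxA).1 (by simpa [hxA] using hx)
  · by_cases hxA : x ∈ A
    · simpa [hxA] using (hgA x hxA).2.2
    · simp [hxA, symmDisplacements, hx]

end SymmDisplacements

theorem stmt_5_general {X : Type*} [MeasurableSpace X] {m : ℕ} (μ : Measure X) [SigmaFinite μ]
    (F : X → Set (EuclideanSpace ℝ (Fin m)))
    (hFmeas : SVMeasurable F)
    (hFcpt : ∀ x, IsCompact (F x))
    (hFconv : ∀ x, Convex ℝ (F x))
    (p : ℝ≥0∞)
    (f : X → EuclideanSpace ℝ (Fin m)) (hf : MemLp f p μ)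
    (hfF : ∀ᵐ x ∂μ, f x ∈ F x)
    (E : Set X) (hE : MeasurableSet E) (hEpos : 0 < μ E)
    (hnotext : ∀ᵐ x ∂μ, x ∈ E → f x ∉ Set.extremePoints ℝ (F x)) :
    ∃ α β : X → EuclideanSpace ℝ (Fin m),
      MemLp α p μ ∧ MemLp β p μ ∧
      (∀ᵐ x ∂μ, α x ∈ F x) ∧ (∀ᵐ x ∂μ, β x ∈ F x) ∧
      ¬ (α =ᵐ[μ] β) ∧
      (∀ᵐ x ∂μ, f x = (2⁻¹ : ℝ) • (α x + β x)) := by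
  obtain ⟨f', hf', hff'⟩ : ∃ f', Measurable f' ∧ f =ᵐ[μ] f' :=
    ⟨_, hf.aestronglyMeasurable.aemeasurable.measurable_mk,
      hf.aestronglyMeasurable.aemeasurable.ae_eq_mk⟩
  have hf'F : ∀ᵐ x ∂μ, f' x ∈ F x := by
    filter_upwards [hfF, hff'] with x hx hxf
    rwa [← hxf]
  have hnz : ∀ᵐ x ∂μ, x ∈ E → ∃ v ≠ 0, v ∈ symmDisplacements F f' x := by
    filter_upwards [hnotext, hf'F, hff'] with x hx hxF hxf hxE
    exact (hFconv x).exists_add_sub_mem_of_notMem_extremePoints hxF (hxf ▸ hx hxE)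
  obtain ⟨g, hgLp, hg0, hgF⟩ := exists_memLp_mem_symmDisplacements p hFmeas
    (fun x => (hFcpt x).isClosed) hFconv hf' hE hEpos hnz
  have hf'Lp : MemLp f' p μ := hf.ae_eq hff'
  refine ⟨f' + g, f' - g, hf'Lp.add hgLp, hf'Lp.sub hgLp, ?_, ?_, fun h => hg0 ?_, ?_⟩
  · filter_upwards [hf'F] with x hx using (hgF x hx).1
  · filter_upwards [hf'F] with x hx using (hgF x hx).2
  · filter_upwards [h] with x hx
    simpa only [Pi.add_apply, Pi.sub_apply, sub_eq_add_neg, add_right_inj, eq_neg_iff_add_eq_zero,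
      ← two_smul ℝ, smul_eq_zero, two_ne_zero, false_or, Pi.zero_apply] using hx
  · filter_upwards [hff'] with x hx
    simp only [hx, Pi.add_apply, Pi.sub_apply]
    module

/-- An `Lᵖ`-selection of `F` that fails to be an extreme-point selection
on a set of positive measure is the midpoint of two distinct `Lᵖ`-selections of `F`. -/
theorem stmt_5 {X : Type*} [MeasurableSpace X] {m : ℕ} (μ : Measure X) [SigmaFinite μ]
    (F : X → Set (EuclideanSpace ℝ (Fin m)))
    (hFmeas : SVMeasurable F)
    (hFne : ∀ x, (F x).Nonempty) (hFcpt : ∀ x, IsCompact (F x))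
    (hFconv : ∀ x, Convex ℝ (F x))
    (p : ℝ≥0∞) (hp : 1 ≤ p)
    (f : X → EuclideanSpace ℝ (Fin m)) (hf : MemLp f p μ)
    (hfF : ∀ᵐ x ∂μ, f x ∈ F x)
    (E : Set X) (hE : MeasurableSet E) (hEpos : 0 < μ E)
    (hnotext : ∀ᵐ x ∂μ, x ∈ E → f x ∉ Set.extremePoints ℝ (F x)) :
    ∃ α β : X → EuclideanSpace ℝ (Fin m),
      MemLp α p μ ∧ MemLp β p μ ∧
      (∀ᵐ x ∂μ, α x ∈ F x) ∧ (∀ᵐ x ∂μ, β x ∈ F x) ∧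
      ¬ (α =ᵐ[μ] β) ∧
      (∀ᵐ x ∂μ, f x = (2⁻¹ : ℝ) • (α x + β x)) :=
  stmt_5_general μ F hFmeas hFcpt hFconv p f hf hfF E hE hEpos hnotext
end

section
/- Let (X, A, μ) be a finite nonatomic measure space and U ⊆ ℝᵐ compact convex with more than one element. Then the feasible set 𝒰 = {u ∈ L¹(X;ℝᵐ) : u(x) ∈ U a.e.} has the Radon–Nikodým property: every nonempty bounded subset W of 𝒰 is dentable, i.e., for every ε > 0 there exist ξ ∈ L^∞(X;ℝᵐ) and δ > 0 such that the slice S(W, ξ, δ) = {w ∈ W : ⟨ξ, w⟩ ≤ inf_{v∈W}⟨ξ, v⟩ + δ} has diameter at most ε in L¹. -/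
open MeasureTheory Filter Topology Set
open scoped ENNReal

/-- Weak convergence in `L¹(X; ℝᵐ)`. -/
def WeakL1Conv {X : Type*} [MeasurableSpace X] {m : ℕ} (μ : Measure X)
    (fn : ℕ → X → EuclideanSpace ℝ (Fin m)) (f : X → EuclideanSpace ℝ (Fin m)) : Prop :=
  ∀ g : X → EuclideanSpace ℝ (Fin m), Measurable g → (∃ C, ∀ x, ‖g x‖ ≤ C) →
    Tendsto (fun n => ∫ x, (inner ℝ (fn n x) (g x) : ℝ) ∂μ) atTop
      (𝓝 (∫ x, (inner ℝ (f x) (g x) : ℝ) ∂μ))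

/-- The feasible set `𝒰 = {u ∈ L¹(X;ℝᵐ) : u(x) ∈ U a.e.}`. -/
def Feasible {X : Type*} [MeasurableSpace X] {m : ℕ} (μ : Measure X)
    (U : Set (EuclideanSpace ℝ (Fin m))) : Set (X → EuclideanSpace ℝ (Fin m)) :=
  {u | Integrable u μ ∧ ∀ᵐ x ∂μ, u x ∈ U}

/-! Pointwise bounds make every function of `𝒰` essentially bounded, so `W` is a bounded subset of
`L²(X;ℝᵐ)`, and on a finite measure space the `L¹` distance is at most `√(μ X)` times the `L²`
distance. Bounded sets of a Hilbert space are dentable: if `w ∈ W` nearly maximises `‖·‖²` on `W`,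
expanding `‖v - w‖²` shows that the slice of `W` cut by `⟪-w, ·⟫` at depth `δ` lies in the ball of
radius `√(3δ)` around `w`. The slicing functional `-w` is essentially bounded because `w ∈ 𝒰`. -/

section Hilbert

variable {H : Type*} [NormedAddCommGroup H] [InnerProductSpace ℝ H]

theorem norm_sub_sq_lt_of_norm_sq_le_inner_add {v w : H} {s δ : ℝ} (hv : ‖v‖ ^ 2 ≤ s)
    (hw : s - δ < ‖w‖ ^ 2) (hvw : ‖w‖ ^ 2 ≤ inner ℝ w v + δ) : ‖v - w‖ ^ 2 < 3 * δ := by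
  rw [norm_sub_sq_real, real_inner_comm]
  linarith

theorem Bornology.IsBounded.exists_slice_norm_sub_le {V : Set H} (hne : V.Nonempty)
    (hV : Bornology.IsBounded V) {ε : ℝ} (hε : 0 < ε) :
    ∃ w ∈ V, ∃ δ > 0, ∀ v₁ ∈ V, ∀ v₂ ∈ V,
      inner ℝ (-w) v₁ ≤ sInf ((fun v => inner ℝ (-w) v) '' V) + δ →
      inner ℝ (-w) v₂ ≤ sInf ((fun v => inner ℝ (-w) v) '' V) + δ → ‖v₁ - v₂‖ ≤ ε := by
  set δ := ε ^ 2 / 12 with hδ_def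
  have hδ : 0 < δ := by positivity
  obtain ⟨C, hC⟩ := isBounded_iff_forall_norm_le.1 hV
  have hsq : BddAbove ((fun v => ‖v‖ ^ 2) '' V) :=
    ⟨C ^ 2, forall_mem_image.2 fun v hv => pow_le_pow_left₀ (norm_nonneg v) (hC v hv) 2⟩
  set s := sSup ((fun v => ‖v‖ ^ 2) '' V)
  obtain ⟨_, ⟨w, hwV, rfl⟩, hw⟩ := exists_lt_of_lt_csSup (hne.image _) (sub_lt_self s hδ)
  have hclose : ∀ v ∈ V, inner ℝ (-w) v ≤ sInf ((fun v => inner ℝ (-w) v) '' V) + δ →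
      ‖v - w‖ < ε / 2 := by
    intro v hv hslice
    have hinf : sInf ((fun v => inner ℝ (-w) v) '' V) ≤ inner ℝ (-w) w :=
      csInf_le ((innerSL ℝ (-w)).lipschitz.isBounded_image hV).bddBelow (mem_image_of_mem _ hwV)
    have hvw : ‖w‖ ^ 2 ≤ inner ℝ w v + δ := by
      rw [inner_neg_left] at hslice hinf
      rw [← real_inner_self_eq_norm_sq]
      linarith
    have := norm_sub_sq_lt_of_norm_sq_le_inner_add (le_csSup hsq (mem_image_of_mem _ hv)) hw hvw
    exact lt_of_pow_lt_pow_left₀ 2 (by positivity) (by linarith)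
  refine ⟨w, hwV, δ, hδ, fun v₁ hv₁ v₂ hv₂ h₁ h₂ => ?_⟩
  have htri := norm_sub_le_norm_sub_add_norm_sub v₁ w v₂
  rw [norm_sub_rev w] at htri
  linarith [hclose v₁ hv₁ h₁, hclose v₂ hv₂ h₂]

end Hilbert

section Lp

variable {X E : Type*} [MeasurableSpace X] {μ : Measure X} [NormedAddCommGroup E]

def lpClasses (p : ℝ≥0∞) (μ : Measure X) (W : Set (X → E)) : Set (Lp E p μ) :=
  {f | ∃ w ∈ W, f =ᵐ[μ] w}

theorem isBounded_lpClasses [IsFiniteMeasure μ] {p : ℝ≥0∞} [Fact (1 ≤ p)] {W : Set (X → E)}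
    {R : ℝ} (hR : 0 ≤ R) (hW : ∀ w ∈ W, ∀ᵐ x ∂μ, ‖w x‖ ≤ R) :
    Bornology.IsBounded (lpClasses p μ W) := by
  refine isBounded_iff_forall_norm_le.2 ⟨_, fun f ⟨w, hw, hfw⟩ => Lp.norm_le_of_ae_bound hR ?_⟩
  filter_upwards [hfw, hW w hw] with x hfx hwx
  rwa [hfx]

theorem integral_inner_eq_inner_of_ae_eq [InnerProductSpace ℝ E] {f g : Lp E 2 μ} {u v : X → E}
    (hf : f =ᵐ[μ] u) (hg : g =ᵐ[μ] v) : ∫ x, inner ℝ (u x) (v x) ∂μ = inner ℝ f g := by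
  rw [L2.inner_def]
  refine integral_congr_ae ?_
  filter_upwards [hf, hg] with x hfx hgx
  rw [hfx, hgx]

theorem image_integral_inner_eq_image_inner [InnerProductSpace ℝ E] {ξ : X → E} {g : Lp E 2 μ}
    (hξ : g =ᵐ[μ] ξ) {W : Set (X → E)} (hW : ∀ w ∈ W, MemLp w 2 μ) :
    (fun v => ∫ x, inner ℝ (ξ x) (v x) ∂μ) '' W = (fun f => inner ℝ g f) '' lpClasses 2 μ W := by
  ext a
  constructor
  · rintro ⟨w, hw, rfl⟩
    exact ⟨(hW w hw).toLp w, ⟨w, hw, (hW w hw).coeFn_toLp⟩,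
      (integral_inner_eq_inner_of_ae_eq hξ (hW w hw).coeFn_toLp).symm⟩
  · rintro ⟨f, ⟨w, hw, hfw⟩, rfl⟩
    exact ⟨w, hw, integral_inner_eq_inner_of_ae_eq hξ hfw⟩

theorem integral_norm_le_sqrt_measureReal_mul_norm [IsFiniteMeasure μ] {f : Lp E 2 μ}
    {u : X → E} (hf : f =ᵐ[μ] u) : ∫ x, ‖u x‖ ∂μ ≤ √(μ.real univ) * ‖f‖ := by
  have hL1 := eLpNorm_le_eLpNorm_mul_rpow_measure_univ (p := 1) (q := 2) one_le_two
    (Lp.aestronglyMeasurable f) (μ := μ)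
  have hnorm : (fun x => ‖f x‖) =ᵐ[μ] fun x => ‖u x‖ := hf.mono fun x hx => congrArg norm hx
  rw [← integral_congr_ae hnorm, integral_norm_eq_lintegral_enorm (Lp.aestronglyMeasurable f),
    ← eLpNorm_one_eq_lintegral_enorm, Lp.norm_def, Real.sqrt_eq_rpow, measureReal_def,
    ENNReal.toReal_rpow, mul_comm, ← ENNReal.toReal_mul]
  refine ENNReal.toReal_mono (ENNReal.mul_ne_top (Lp.eLpNorm_ne_top f) ?_) (hL1.trans_eq ?_)
  · exact ENNReal.rpow_ne_top_of_nonneg (by norm_num) (measure_ne_top μ univ)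
  · norm_num

theorem exists_measurable_norm_le_ae_eq [MeasurableSpace E] [BorelSpace E] {u : X → E}
    (hu : AEStronglyMeasurable u μ) {R : ℝ} (hR : 0 ≤ R) (hu_le : ∀ᵐ x ∂μ, ‖u x‖ ≤ R) :
    ∃ ξ : X → E, Measurable ξ ∧ (∀ x, ‖ξ x‖ ≤ R) ∧ ξ =ᵐ[μ] u := by
  obtain ⟨g, hg_meas, hug⟩ := hu
  have hg : Measurable g := hg_meas.measurable
  refine ⟨{x | ‖g x‖ ≤ R}.indicator g, hg.indicator (measurableSet_le hg.norm measurable_const),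
    fun x => ?_, ?_⟩
  · by_cases hx : ‖g x‖ ≤ R <;> simp [indicator, hx, hR]
  · filter_upwards [hug, hu_le] with x hx hxR
    rw [indicator_of_mem (s := {x | ‖g x‖ ≤ R}) (show ‖g x‖ ≤ R from hx ▸ hxR), hx]

theorem exists_slice_integral_norm_sub_le [InnerProductSpace ℝ E] [MeasurableSpace E]
    [BorelSpace E] [IsFiniteMeasure μ] {W : Set (X → E)} (hWne : W.Nonempty) {R : ℝ}
    (hR : 0 ≤ R) (hW_meas : ∀ w ∈ W, AEStronglyMeasurable w μ)
    (hW_le : ∀ w ∈ W, ∀ᵐ x ∂μ, ‖w x‖ ≤ R) {ε : ℝ} (hε : 0 < ε) :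
    ∃ (ξ : X → E) (δ : ℝ), Measurable ξ ∧ (∀ x, ‖ξ x‖ ≤ R) ∧ 0 < δ ∧
      ∀ w₁ ∈ W, ∀ w₂ ∈ W,
        (∫ x, (inner ℝ (ξ x) (w₁ x) : ℝ) ∂μ) ≤
          sInf ((fun v => ∫ x, (inner ℝ (ξ x) (v x) : ℝ) ∂μ) '' W) + δ →
        (∫ x, (inner ℝ (ξ x) (w₂ x) : ℝ) ∂μ) ≤
          sInf ((fun v => ∫ x, (inner ℝ (ξ x) (v x) : ℝ) ∂μ) '' W) + δ →
        ∫ x, ‖w₁ x - w₂ x‖ ∂μ ≤ ε := by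
  have hW_L2 : ∀ w ∈ W, MemLp w 2 μ := fun w hw => .of_bound (hW_meas w hw) R (hW_le w hw)
  have hL2 : ∀ w (hw : w ∈ W), (hW_L2 w hw).toLp w ∈ lpClasses 2 μ W :=
    fun w hw => ⟨w, hw, (hW_L2 w hw).coeFn_toLp⟩
  set c := √(μ.real univ)
  obtain ⟨f₀, ⟨w₀, hw₀, hf₀⟩, δ, hδ, hslice⟩ :=
    (isBounded_lpClasses hR hW_le).exists_slice_norm_sub_le
      ⟨_, hL2 _ hWne.some_mem⟩ (ε := ε / (c + 1)) (by positivity)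
  obtain ⟨ξ, hξ_meas, hξ_le, hξ⟩ := exists_measurable_norm_le_ae_eq (hW_meas w₀ hw₀).neg hR
    (by simpa only [Pi.neg_apply, norm_neg] using hW_le w₀ hw₀)
  have hξf₀ : ⇑(-f₀) =ᵐ[μ] ξ := (Lp.coeFn_neg f₀).trans (hf₀.neg.trans hξ.symm)
  refine ⟨ξ, δ, hξ_meas, hξ_le, hδ, fun w₁ hw₁ w₂ hw₂ h₁ h₂ => ?_⟩
  rw [image_integral_inner_eq_image_inner hξf₀ hW_L2,
    integral_inner_eq_inner_of_ae_eq hξf₀ (hW_L2 w₁ hw₁).coeFn_toLp] at h₁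
  rw [image_integral_inner_eq_image_inner hξf₀ hW_L2,
    integral_inner_eq_inner_of_ae_eq hξf₀ (hW_L2 w₂ hw₂).coeFn_toLp] at h₂
  calc ∫ x, ‖w₁ x - w₂ x‖ ∂μ ≤ c * ‖(hW_L2 w₁ hw₁).toLp w₁ - (hW_L2 w₂ hw₂).toLp w₂‖ :=
        integral_norm_le_sqrt_measureReal_mul_norm ((Lp.coeFn_sub _ _).trans
          ((hW_L2 w₁ hw₁).coeFn_toLp.sub (hW_L2 w₂ hw₂).coeFn_toLp))
    _ ≤ c * (ε / (c + 1)) := by gcongr; exact hslice _ (hL2 w₁ hw₁) _ (hL2 w₂ hw₂) h₁ h₂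
    _ ≤ ε := by
        rw [mul_div_assoc', div_le_iff₀ (by positivity)]
        nlinarith [Real.sqrt_nonneg (μ.real univ)]

end Lp

theorem stmt_14_general {X : Type*} [MeasurableSpace X] {m : ℕ} (μ : Measure X)
    [IsFiniteMeasure μ]
    (U : Set (EuclideanSpace ℝ (Fin m)))
    (hUcpt : IsCompact U)
    (W : Set (X → EuclideanSpace ℝ (Fin m))) (hWne : W.Nonempty)
    (hWU : W ⊆ Feasible μ U) :
    ∀ ε > 0, ∃ (ξ : X → EuclideanSpace ℝ (Fin m)) (δ : ℝ), Measurable ξ ∧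
      (∃ C, ∀ x, ‖ξ x‖ ≤ C) ∧ 0 < δ ∧
      ∀ w₁ ∈ W, ∀ w₂ ∈ W,
        (∫ x, (inner ℝ (ξ x) (w₁ x) : ℝ) ∂μ) ≤
          sInf ((fun v => ∫ x, (inner ℝ (ξ x) (v x) : ℝ) ∂μ) '' W) + δ →
        (∫ x, (inner ℝ (ξ x) (w₂ x) : ℝ) ∂μ) ≤
          sInf ((fun v => ∫ x, (inner ℝ (ξ x) (v x) : ℝ) ∂μ) '' W) + δ →
        ∫ x, ‖w₁ x - w₂ x‖ ∂μ ≤ ε := by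
  intro ε hε
  obtain ⟨R, hR, hRU⟩ := hUcpt.isBounded.exists_pos_norm_le
  obtain ⟨ξ, δ, hξ, hξ_le, hδ, hslice⟩ := exists_slice_integral_norm_sub_le hWne hR.le
    (fun w hw => (hWU hw).1.aestronglyMeasurable) (fun w hw => (hWU hw).2.mono fun x => hRU _) hε
  exact ⟨ξ, δ, hξ, ⟨R, hξ_le⟩, hδ, hslice⟩

/-- **Radon–Nikodým property of the feasible set.** Every nonempty bounded
subset `W` of the feasible set `𝒰` is dentable: for every `ε > 0` there are a bounded
measurable `ξ ∈ L^∞(X;ℝᵐ)` and `δ > 0` such that the slice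
`S(W, ξ, δ) = {w ∈ W : ⟨ξ, w⟩ ≤ inf_{v ∈ W} ⟨ξ, v⟩ + δ}` has `L¹`-diameter at most `ε`. -/
theorem stmt_14 {X : Type*} [MeasurableSpace X] {m : ℕ} (μ : Measure X)
    [IsFiniteMeasure μ] [NullSingletonClass μ]
    (U : Set (EuclideanSpace ℝ (Fin m)))
    (hUcpt : IsCompact U) (hUconv : Convex ℝ U) (hUnt : U.Nontrivial)
    (W : Set (X → EuclideanSpace ℝ (Fin m))) (hWne : W.Nonempty)
    (hWU : W ⊆ Feasible μ U)
    (hWbdd : ∃ C : ℝ, ∀ w ∈ W, ∫ x, ‖w x‖ ∂μ ≤ C) :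
    ∀ ε > 0, ∃ (ξ : X → EuclideanSpace ℝ (Fin m)) (δ : ℝ), Measurable ξ ∧
      (∃ C, ∀ x, ‖ξ x‖ ≤ C) ∧ 0 < δ ∧
      ∀ w₁ ∈ W, ∀ w₂ ∈ W,
        (∫ x, (inner ℝ (ξ x) (w₁ x) : ℝ) ∂μ) ≤
          sInf ((fun v => ∫ x, (inner ℝ (ξ x) (v x) : ℝ) ∂μ) '' W) + δ →
        (∫ x, (inner ℝ (ξ x) (w₂ x) : ℝ) ∂μ) ≤
          sInf ((fun v => ∫ x, (inner ℝ (ξ x) (v x) : ℝ) ∂μ) '' W) + δ →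
        ∫ x, ‖w₁ x - w₂ x‖ ∂μ ≤ ε :=
  stmt_14_general μ U hUcpt W hWne hWU
end
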